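/- Inversion of the Sinkhorn potential (second part of the inversion lemma): assume the kernel matrix K = (exp(−c_{ij}/2))_{i,j} is positive definite. Let f ∈ F := {∇Ω(α) : α ∈ △^d} be a symmetric Sinkhorn potential. Then Ω_C^*(f) = 0 (equivalently min_{α∈△^d} Φ_C(α,f) = 1) and ∇Ω(g-softmax(f)) = f. -/

import Mathlib

open Finset Real Filter

noncomputable section

/-- The probability simplex in `ℝ^d`. -/
def simplexS (d : ℕ) : Set (Fin d → ℝ) := stdSimplex ℝ (Fin d)


open scoped Classical

/-- `Φ_C(α,f) = Σ_{i,j} α_i α_j exp(-(f_i + f_j + c_{ij})/2)`. -/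
def Phi {d : ℕ} (C : Matrix (Fin d) (Fin d) ℝ) (α f : Fin d → ℝ) : ℝ :=
  ∑ i, ∑ j, α i * α j * Real.exp (-(f i + f j + C i j) / 2)

/-- The geometric log-sum-exp `Ω_C^*(f) = -log min_{α ∈ △^d} Φ_C(α, f)`. -/
def OmegaStar {d : ℕ} (C : Matrix (Fin d) (Fin d) ℝ) (f : Fin d → ℝ) : ℝ :=
  -Real.log (sInf ((fun α => Phi C α f) '' simplexS d))

/-- The geometric softmax: the (unique, when the kernel is positive definite) minimizer of
`Φ_C(·, f)` over the simplex. -/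
def gsoftmax {d : ℕ} (C : Matrix (Fin d) (Fin d) ℝ) (f : Fin d → ℝ) : Fin d → ℝ :=
  if h : ∃ α ∈ simplexS d, IsMinOn (fun β => Phi C β f) (simplexS d) α
  then h.choose else fun _ => 0

/-- The soft C-transform `T(f,α)_i = -2 log Σ_j α_j exp((f_j - c_{ij})/2)`. -/
def Tsoft {d : ℕ} (C : Matrix (Fin d) (Fin d) ℝ) (f α : Fin d → ℝ) : Fin d → ℝ :=
  fun i => -2 * Real.log (∑ j, α j * Real.exp ((f j - C i j) / 2))

/-- `f` is the symmetric Sinkhorn potential of `α`: `-f = T(-f, α)`. -/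
def IsSinkhornPotential {d : ℕ} (C : Matrix (Fin d) (Fin d) ℝ) (α f : Fin d → ℝ) : Prop :=
  -f = Tsoft C (-f) α

/-- The symmetric Sinkhorn potential `∇Ω(α)`: the (unique, when the kernel is positive
definite) `f` with `-f = T(-f, α)`. -/
def gradOmega {d : ℕ} (C : Matrix (Fin d) (Fin d) ℝ) (α : Fin d → ℝ) : Fin d → ℝ :=
  if h : ∃ f : Fin d → ℝ, IsSinkhornPotential C α f then h.choose else fun _ => 0

/-- The extrapolation `f^E = -T(-(f - Ω_C^*(f)·1), g-softmax(f)) + Ω_C^*(f)·1`. -/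
def extrap {d : ℕ} (C : Matrix (Fin d) (Fin d) ℝ) (f : Fin d → ℝ) : Fin d → ℝ :=
  fun i => -(Tsoft C (fun j => -(f j - OmegaStar C f)) (gsoftmax C f) i) + OmegaStar C f

/-- The kernel matrix `K = (exp(-c_{ij}/2))_{ij}`. -/
def kernelK {d : ℕ} (C : Matrix (Fin d) (Fin d) ℝ) : Matrix (Fin d) (Fin d) ℝ :=
  Matrix.of fun i j => Real.exp (-(C i j) / 2)

/-!
With `u = exp(-f/2)`, `Φ_C(β, f)` is the quadratic form of `K` at `β u`, and `f` being the
Sinkhorn potential of `α` says exactly `K (α u) = u⁻¹`. For `β` in the simplex the cross term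
`(β u)ᵀ K (α u)` is then `Σ β_i = 1`, so `Φ_C(β, f) = 1 + ((β - α) u)ᵀ K ((β - α) u)`: the minimum
is `1`, attained only at `α`, and `g-softmax(f) = α`. The potential of `α` is unique: if also
`K (α v) = v⁻¹`, then `w = α (u - v)` has `wᵀ K w = Σ α_i (u_i - v_i)(u_i⁻¹ - v_i⁻¹) ≤ 0`, so
`w = 0` and `u⁻¹ = K (α u) = K (α v) = v⁻¹`.
-/

namespace Matrix

variable {ι : Type*} [Fintype ι]

theorem IsSymm.dotProduct_mulVec_eq_sub_add {R : Type*} [CommRing R] {K : Matrix ι ι R}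
    (hK : K.IsSymm) (x a : ι → R) :
    x ⬝ᵥ K *ᵥ x = (x - a) ⬝ᵥ K *ᵥ (x - a) + 2 * (x ⬝ᵥ K *ᵥ a) - a ⬝ᵥ K *ᵥ a := by
  have hsymm : a ⬝ᵥ K *ᵥ x = x ⬝ᵥ K *ᵥ a := by
    rw [dotProduct_mulVec, ← mulVec_transpose, hK.eq, dotProduct_comm]
  simp only [mulVec_sub, dotProduct_sub, sub_dotProduct, hsymm]
  ring

theorem IsSymm.dotProduct_mulVec_mul_eq_one_add {K : Matrix ι ι ℝ} (hK : K.IsSymm)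
    {α β u : ι → ℝ} (hu : ∀ i, u i ≠ 0) (hscal : K *ᵥ (α * u) = u⁻¹)
    (hα : ∑ i, α i = 1) (hβ : ∑ i, β i = 1) :
    (β * u) ⬝ᵥ K *ᵥ (β * u) = 1 + (β * u - α * u) ⬝ᵥ K *ᵥ (β * u - α * u) := by
  have hmass : ∀ γ : ι → ℝ, (γ * u) ⬝ᵥ u⁻¹ = ∑ i, γ i := fun γ =>
    Finset.sum_congr rfl fun i _ => by simp [hu i]
  rw [hK.dotProduct_mulVec_eq_sub_add _ (α * u), hscal, hmass, hmass, hα, hβ]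
  ring

theorem PosDef.eq_of_mulVec_mul_eq_inv {K : Matrix ι ι ℝ} (hK : K.PosDef) {α u v : ι → ℝ}
    (hα : ∀ i, 0 ≤ α i) (hu : ∀ i, 0 < u i) (hv : ∀ i, 0 < v i)
    (hKu : K *ᵥ (α * u) = u⁻¹) (hKv : K *ᵥ (α * v) = v⁻¹) : u = v := by
  set w := α * u - α * v
  have hform : w ⬝ᵥ K *ᵥ w ≤ 0 := by
    rw [mulVec_sub, hKu, hKv]
    refine Finset.sum_nonpos fun i _ => ?_
    have key : (α i * u i - α i * v i) * ((u i)⁻¹ - (v i)⁻¹)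
        = -(α i * ((u i - v i) ^ 2 / (u i * v i))) := by
      field_simp [(hu i).ne', (hv i).ne']
      ring
    simp only [w, Pi.sub_apply, Pi.mul_apply, Pi.inv_apply]
    rw [key, neg_nonpos]
    exact mul_nonneg (hα i) (div_nonneg (sq_nonneg _) (mul_pos (hu i) (hv i)).le)
  have hw : w = 0 := by
    by_contra hw
    exact (hK.dotProduct_mulVec_pos hw).not_ge hform
  have hinv : u⁻¹ = v⁻¹ := by rw [← hKu, ← hKv, sub_eq_zero.mp hw]
  exact inv_injective hinv

end Matrix

open Matrix

def sinkhornScaling {ι : Type*} (f : ι → ℝ) : ι → ℝ := fun i => exp (-f i / 2)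

theorem sinkhornScaling_pos {ι : Type*} (f : ι → ℝ) (i : ι) : 0 < sinkhornScaling f i :=
  exp_pos _

theorem sinkhornScaling_injective {ι : Type*} : Function.Injective (sinkhornScaling (ι := ι)) :=
  fun f g h => funext fun i => by
    have := exp_injective (congrFun h i)
    linarith

section

variable {d : ℕ} {C : Matrix (Fin d) (Fin d) ℝ} {α f : Fin d → ℝ}

theorem kernelK_isSymm_of_posDef (hK : (kernelK C).PosDef) : (kernelK C).IsSymm :=
  isHermitian_iff_isSymm.mp hK.isHermitian

theorem Phi_eq_dotProduct (β : Fin d → ℝ) :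
    Phi C β f = (β * sinkhornScaling f) ⬝ᵥ kernelK C *ᵥ (β * sinkhornScaling f) := by
  simp only [Phi, dotProduct, mulVec, kernelK, sinkhornScaling, of_apply, Pi.mul_apply,
    Finset.mul_sum]
  refine Finset.sum_congr rfl fun i _ => Finset.sum_congr rfl fun j _ => ?_
  rw [show -(f i + f j + C i j) / 2 = -f i / 2 + (-C i j / 2 + -f j / 2) by ring, exp_add,
    exp_add]
  ring

theorem IsSinkhornPotential.kernelK_mulVec (hα : α ∈ simplexS d)
    (hf : IsSinkhornPotential C α f) :
    kernelK C *ᵥ (α * sinkhornScaling f) = (sinkhornScaling f)⁻¹ := by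
  funext i
  set S := ∑ j, α j * exp ((-f j - C i j) / 2)
  have hS : 0 < S := by
    obtain ⟨j, -, hj⟩ : ∃ j ∈ Finset.univ, (0 : ℝ) < α j :=
      Finset.exists_lt_of_sum_lt (by simp [hα.2])
    exact Finset.sum_pos' (fun j _ => mul_nonneg (hα.1 j) (exp_pos _).le)
      ⟨j, Finset.mem_univ _, mul_pos hj (exp_pos _)⟩
  have hlog : log S = f i / 2 := by
    have := congrFun hf i
    simp only [Tsoft, Pi.neg_apply, S] at this ⊢
    linarith
  have hS_eq : S = exp (f i / 2) := by rw [← hlog, exp_log hS]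
  calc (kernelK C *ᵥ (α * sinkhornScaling f)) i = S := by
        simp only [mulVec, dotProduct, kernelK, sinkhornScaling, of_apply, Pi.mul_apply, S]
        refine Finset.sum_congr rfl fun j _ => ?_
        rw [show (-f j - C i j) / 2 = -C i j / 2 + -f j / 2 by ring, exp_add]
        ring
    _ = (sinkhornScaling f)⁻¹ i := by
        rw [hS_eq, Pi.inv_apply, sinkhornScaling, ← exp_neg]
        ring_nf

theorem IsSinkhornPotential.eq (hK : (kernelK C).PosDef) (hα : α ∈ simplexS d) {g : Fin d → ℝ}
    (hf : IsSinkhornPotential C α f) (hg : IsSinkhornPotential C α g) : f = g :=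
  sinkhornScaling_injective <| hK.eq_of_mulVec_mul_eq_inv hα.1 (sinkhornScaling_pos f)
    (sinkhornScaling_pos g) (hf.kernelK_mulVec hα) (hg.kernelK_mulVec hα)

theorem IsSinkhornPotential.gradOmega_eq (hK : (kernelK C).PosDef) (hα : α ∈ simplexS d)
    (hf : IsSinkhornPotential C α f) : gradOmega C α = f := by
  have hex : ∃ g, IsSinkhornPotential C α g := ⟨f, hf⟩
  rw [gradOmega, dif_pos hex]
  exact (hf.eq hK hα hex.choose_spec).symm

theorem IsSinkhornPotential.Phi_eq_one_add (hK : (kernelK C).PosDef) (hα : α ∈ simplexS d)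
    (hf : IsSinkhornPotential C α f) {β : Fin d → ℝ} (hβ : β ∈ simplexS d) :
    Phi C β f = 1 + (β * sinkhornScaling f - α * sinkhornScaling f) ⬝ᵥ
      kernelK C *ᵥ (β * sinkhornScaling f - α * sinkhornScaling f) := by
  rw [Phi_eq_dotProduct]
  exact (kernelK_isSymm_of_posDef hK).dotProduct_mulVec_mul_eq_one_add
    (fun i => (sinkhornScaling_pos f i).ne') (hf.kernelK_mulVec hα) hα.2 hβ.2

theorem IsSinkhornPotential.Phi_self (hK : (kernelK C).PosDef) (hα : α ∈ simplexS d)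
    (hf : IsSinkhornPotential C α f) : Phi C α f = 1 := by
  simp [hf.Phi_eq_one_add hK hα hα]

theorem IsSinkhornPotential.isLeast_Phi (hK : (kernelK C).PosDef) (hα : α ∈ simplexS d)
    (hf : IsSinkhornPotential C α f) :
    IsLeast ((fun β => Phi C β f) '' simplexS d) 1 := by
  refine ⟨⟨α, hα, hf.Phi_self hK hα⟩, ?_⟩
  rintro _ ⟨β, hβ, rfl⟩
  show 1 ≤ Phi C β f
  rw [hf.Phi_eq_one_add hK hα hβ]
  exact le_add_of_nonneg_right (hK.posSemidef.dotProduct_mulVec_nonneg _)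

theorem IsSinkhornPotential.eq_of_Phi_eq_one (hK : (kernelK C).PosDef) (hα : α ∈ simplexS d)
    (hf : IsSinkhornPotential C α f) {β : Fin d → ℝ} (hβ : β ∈ simplexS d)
    (hβ1 : Phi C β f = 1) : β = α := by
  rw [hf.Phi_eq_one_add hK hα hβ, add_eq_left] at hβ1
  have hdiff : β * sinkhornScaling f = α * sinkhornScaling f := by
    by_contra hne
    exact (hK.dotProduct_mulVec_pos (sub_ne_zero.mpr hne)).ne' hβ1
  funext i
  exact mul_right_cancel₀ (sinkhornScaling_pos f i).ne' (congrFun hdiff i)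

theorem IsSinkhornPotential.gsoftmax_eq (hK : (kernelK C).PosDef) (hα : α ∈ simplexS d)
    (hf : IsSinkhornPotential C α f) : gsoftmax C f = α := by
  have hleast := hf.isLeast_Phi hK hα
  have hmin : IsMinOn (fun β => Phi C β f) (simplexS d) α := isMinOn_iff.mpr fun β hβ => by
    simpa only [hf.Phi_self hK hα] using hleast.2 ⟨β, hβ, rfl⟩
  have hex : ∃ γ ∈ simplexS d, IsMinOn (fun β => Phi C β f) (simplexS d) γ := ⟨α, hα, hmin⟩
  obtain ⟨hγ, hγmin⟩ := hex.choose_spec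
  rw [gsoftmax, dif_pos hex]
  refine hf.eq_of_Phi_eq_one hK hα hγ (le_antisymm ?_ (hleast.2 ⟨_, hγ, rfl⟩))
  simpa only [hf.Phi_self hK hα] using isMinOn_iff.mp hγmin α hα

end

theorem sinkhorn_potential_inversion_second_general (d : ℕ)
    (C : Matrix (Fin d) (Fin d) ℝ)
    (hK : (kernelK C).PosDef) (f : Fin d → ℝ)
    (hf : ∃ α ∈ simplexS d, IsSinkhornPotential C α f) :
    OmegaStar C f = 0 ∧
    sInf ((fun α => Phi C α f) '' simplexS d) = 1 ∧
    gradOmega C (gsoftmax C f) = f := by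
  obtain ⟨α, hα, hpot⟩ := hf
  have hsInf : sInf ((fun α => Phi C α f) '' simplexS d) = 1 :=
    (hpot.isLeast_Phi hK hα).csInf_eq
  refine ⟨by rw [OmegaStar, hsInf, log_one, neg_zero], hsInf, ?_⟩
  rw [hpot.gsoftmax_eq hK hα]
  exact hpot.gradOmega_eq hK hα

/-- Inversion of the Sinkhorn potential (second part): if `f` is a symmetric Sinkhorn
potential of some `α ∈ △^d`, then `Ω_C^*(f) = 0` (equivalently
`min_{α ∈ △^d} Φ_C(α,f) = 1`) and `∇Ω(g-softmax(f)) = f`. -/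
theorem sinkhorn_potential_inversion_second (d : ℕ) (hd : 1 ≤ d)
    (C : Matrix (Fin d) (Fin d) ℝ) (hCsym : C.IsSymm) (hCdiag : ∀ i, C i i = 0)
    (hK : (kernelK C).PosDef) (f : Fin d → ℝ)
    (hf : ∃ α ∈ simplexS d, IsSinkhornPotential C α f) :
    OmegaStar C f = 0 ∧
    sInf ((fun α => Phi C α f) '' simplexS d) = 1 ∧
    gradOmega C (gsoftmax C f) = f :=
  sinkhorn_potential_inversion_second_general d C hK f hf
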